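/- When Bob measures a matched-basis BB84 state through the interferometer, the probability that he obtains a conclusive outcome (a click in mode s₁ or mode d₁) equals 1/2, and conditioned on a conclusive outcome he identifies the bit with certainty. -/
import Mathlib

open Complex

/-- The interferometer map `U_IT : ℂ² → ℂ⁶` with phase `φ`; coordinates are the
amplitudes on output modes `(s₀, s₁, s₂, d₀, d₁, d₂)`. -/
noncomputable def uIT (φ : ℝ) (a b : ℂ) : Fin 6 → ℂ :=
  ![a / 2,
    (b - a * Complex.exp (φ * I)) / 2,
    -(b * Complex.exp (φ * I)) / 2,
    I * a / 2,
    I * (a * Complex.exp (φ * I) + b) / 2,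
    I * b * Complex.exp (φ * I) / 2]

lemma uIT_one (a b : ℂ) : uIT 0 a b 1 = (b - a) / 2 := by simp [uIT]

lemma uIT_four (a b : ℂ) : uIT 0 a b 4 = I * (a + b) / 2 := by
  simp [uIT, Matrix.cons_val_succ]

lemma norm_inv_sqrt2 : ‖(1 / (Real.sqrt 2 : ℂ))‖ = 1 / Real.sqrt 2 := by
  rw [norm_div, norm_one, Complex.norm_real, Real.norm_eq_abs,
    _root_.abs_of_nonneg (Real.sqrt_nonneg 2)]

/-- For a matched-basis BB84 state (`φ = 0`, input `|0_x⟩` or `|1_x⟩`), the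
probability of a conclusive outcome (a click on mode `s₁`, index 1, or mode
`d₁`, index 4) is 1/2, and the amplitude on the mode corresponding to the wrong
bit is zero (so a conclusive outcome identifies the bit with certainty). -/
theorem stmt4 :
    (‖uIT 0 (1 / (Real.sqrt 2 : ℂ)) (1 / (Real.sqrt 2 : ℂ)) 1‖ ^ 2
      + ‖uIT 0 (1 / (Real.sqrt 2 : ℂ)) (1 / (Real.sqrt 2 : ℂ)) 4‖ ^ 2 = 1 / 2) ∧
    uIT 0 (1 / (Real.sqrt 2 : ℂ)) (1 / (Real.sqrt 2 : ℂ)) 1 = 0 ∧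
    (‖uIT 0 (1 / (Real.sqrt 2 : ℂ)) (-(1 / (Real.sqrt 2 : ℂ))) 1‖ ^ 2
      + ‖uIT 0 (1 / (Real.sqrt 2 : ℂ)) (-(1 / (Real.sqrt 2 : ℂ))) 4‖ ^ 2 = 1 / 2) ∧
    uIT 0 (1 / (Real.sqrt 2 : ℂ)) (-(1 / (Real.sqrt 2 : ℂ))) 4 = 0 := by
  have h2 : (Real.sqrt 2) ^ 2 = 2 := Real.sq_sqrt (by norm_num)
  have hpos : (0:ℝ) < Real.sqrt 2 := Real.sqrt_pos.mpr (by norm_num)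
  refine ⟨?_, ?_, ?_, ?_⟩
  · rw [uIT_one, uIT_four, sub_self, zero_div, norm_zero,
      show (I * ((1 / (Real.sqrt 2 : ℂ)) + 1 / (Real.sqrt 2 : ℂ)) / 2)
        = I * (1 / (Real.sqrt 2 : ℂ)) by ring,
      norm_mul, Complex.norm_I, one_mul, norm_inv_sqrt2]
    rw [div_pow, one_pow, h2]; norm_num
  · rw [uIT_one, sub_self, zero_div]
  · rw [uIT_one, uIT_four,
      show ((-(1 / (Real.sqrt 2 : ℂ)) - 1 / (Real.sqrt 2 : ℂ)) / 2)
        = -(1 / (Real.sqrt 2 : ℂ)) by ring,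
      show (I * ((1 / (Real.sqrt 2 : ℂ)) + -(1 / (Real.sqrt 2 : ℂ))) / 2) = 0 by ring,
      norm_zero, norm_neg, norm_inv_sqrt2]
    rw [div_pow, one_pow, h2]; norm_num
  · rw [uIT_four, show (I * ((1 / (Real.sqrt 2 : ℂ)) + -(1 / (Real.sqrt 2 : ℂ))) / 2) = 0 by ring]
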